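/- arXiv:1701.04562 — 6 statements merged into one kernel-verified Lean document; each statement's English description precedes it below -/
import Mathlib

section
/- Let G be a connected simple graph on a finite vertex type V with at least two vertices, let I ⊆ V be the set of IC nodes, let L : V → V → ℝ be a link-cost function and Γ ≥ 1 a real weight. Let i, k ∈ I be distinct vertices that are not adjacent in G. If L(i,k) < Γ − 1 and L(k,i) < Γ − 1, then adding the edge {i,k} strictly decreases the cost of both endpoints: C(i, G+ik) < C(i, G) and C(k, G+ik) < C(k, G). -/
open SimpleGraph
open scoped Classical

noncomputable def bridging {V : Type*} [Fintype V] (G : SimpleGraph V) (i : V) : ℝ :=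
  (G.degree i : ℝ)⁻¹ / ∑ j ∈ G.neighborFinset i, (G.degree j : ℝ)⁻¹

noncomputable def addE {V : Type*} (G : SimpleGraph V) (i k : V) : SimpleGraph V :=
  G ⊔ fromEdgeSet {s(i, k)}

noncomputable def delE {V : Type*} (G : SimpleGraph V) (i k : V) : SimpleGraph V :=
  G.deleteEdges {s(i, k)}

noncomputable def cost {V : Type*} [Fintype V] (G : SimpleGraph V) (I : Set V)
    (L : V → V → ℝ) (Γ : ℝ) (i : V) : ℝ :=
  (∑ z ∈ G.neighborFinset i, L i z) + Γ * (∑ j ∈ I.toFinset, (G.dist i j : ℝ))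
    + (∑ k ∈ Iᶜ.toFinset, (G.dist i k : ℝ)) + bridging G i

lemma addE_adj {V : Type*} (G : SimpleGraph V) (i k a b : V) :
    (addE G i k).Adj a b ↔ G.Adj a b ∨ ((a = i ∧ b = k ∨ a = k ∧ b = i) ∧ a ≠ b) := by
  simp [addE, Sym2.eq_iff]

lemma addE_comm {V : Type*} (G : SimpleGraph V) (i k : V) :
    addE G i k = addE G k i := by
  unfold addE
  rw [Sym2.eq_swap]

lemma addE_nbr_left {V : Type*} [Fintype V] (G : SimpleGraph V) {i k : V} (hik : i ≠ k) :
    (addE G i k).neighborFinset i = insert k (G.neighborFinset i) := by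
  ext a
  simp only [mem_neighborFinset, addE_adj, Finset.mem_insert]
  aesop

lemma addE_nbr_other {V : Type*} [Fintype V] (G : SimpleGraph V) {i k j : V}
    (hji : j ≠ i) (hjk : j ≠ k) :
    (addE G i k).neighborFinset j = G.neighborFinset j := by
  ext a
  simp only [mem_neighborFinset, addE_adj]
  constructor
  · rintro (h | ⟨(⟨rfl, rfl⟩ | ⟨rfl, rfl⟩), -⟩)
    · exact h
    · exact absurd rfl hji
    · exact absurd rfl hjk
  · exact Or.inl

lemma addE_deg_left {V : Type*} [Fintype V] (G : SimpleGraph V) {i k : V} (hik : i ≠ k)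
    (hadj : ¬ G.Adj i k) :
    (addE G i k).degree i = G.degree i + 1 := by
  have hk : k ∉ G.neighborFinset i := by simp [hadj]
  rw [degree, addE_nbr_left G hik, Finset.card_insert_of_notMem hk, degree]

lemma degree_pos_of_connected {V : Type*} [Fintype V] (G : SimpleGraph V) (hG : G.Connected)
    (hV : 1 < Fintype.card V) (i : V) : 0 < G.degree i := by
  obtain ⟨v, hv⟩ := Fintype.exists_ne_of_one_lt_card hV i
  obtain ⟨p⟩ := hG i v
  rw [degree_pos_iff_exists_adj]
  cases p with
  | nil => exact absurd rfl hv
  | cons h _ => exact ⟨_, h⟩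

lemma dist_anti' {V : Type*} (G : SimpleGraph V) (hG : G.Connected) (i k u v : V) :
    (addE G i k).dist u v ≤ G.dist u v :=
  Reachable.dist_anti le_sup_left (hG u v)

lemma bridging_addE_le {V : Type*} [Fintype V] (G : SimpleGraph V) (hG : G.Connected)
    (hV : 1 < Fintype.card V) {i k : V} (hik : i ≠ k) (hadj : ¬ G.Adj i k) :
    bridging (addE G i k) i ≤ bridging G i := by
  have hk : k ∉ G.neighborFinset i := by simp [hadj]
  have hdpos : ∀ v : V, 0 < G.degree v := degree_pos_of_connected G hG hV
  have hSpos : 0 < ∑ j ∈ G.neighborFinset i, (G.degree j : ℝ)⁻¹ := by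
    apply Finset.sum_pos
    · intro j _
      exact inv_pos.mpr (by exact_mod_cast hdpos j)
    · rw [← Finset.card_pos, ← degree]
      exact hdpos i
  have hnew : ∀ j ∈ G.neighborFinset i, (addE G i k).degree j = G.degree j := by
    intro j hj
    have hji : j ≠ i := fun h => G.irrefl (h ▸ (mem_neighborFinset G i j).mp hj)
    have hjk : j ≠ k := fun h => hk (h ▸ hj)
    rw [degree, addE_nbr_other G hji hjk, degree]
  have hdegk : (addE G i k).degree k = G.degree k + 1 := by
    rw [addE_comm]
    exact addE_deg_left G hik.symm (fun h => hadj h.symm)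
  unfold bridging
  rw [addE_deg_left G hik hadj, addE_nbr_left G hik,
    Finset.sum_insert hk, Finset.sum_congr rfl (fun j hj => by rw [hnew j hj]), hdegk]
  apply div_le_div₀ (le_of_lt (inv_pos.mpr (by exact_mod_cast hdpos i))) _ hSpos
  · exact le_add_of_nonneg_left (by positivity)
  · apply inv_anti₀ (by exact_mod_cast hdpos i)
    push_cast
    linarith

lemma cost_addE_lt {V : Type*} [Fintype V] (G : SimpleGraph V) (hG : G.Connected)
    (hV : 1 < Fintype.card V) (I : Set V) (L : V → V → ℝ) (Γ : ℝ) (hΓ : 1 ≤ Γ)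
    (i k : V) (hk : k ∈ I) (hik : i ≠ k) (hadj : ¬ G.Adj i k)
    (h1 : L i k < Γ - 1) :
    cost (addE G i k) I L Γ i < cost G I L Γ i := by
  have hkN : k ∉ G.neighborFinset i := by simp [hadj]
  have hkI : k ∈ I.toFinset := Set.mem_toFinset.mpr hk
  -- edge sum
  have hE : ∑ z ∈ (addE G i k).neighborFinset i, L i z
      = L i k + ∑ z ∈ G.neighborFinset i, L i z := by
    rw [addE_nbr_left G hik, Finset.sum_insert hkN]
  -- distance facts
  have hdnew : (addE G i k).dist i k = 1 := by
    rw [dist_eq_one_iff_adj, addE_adj]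
    exact Or.inr ⟨Or.inl ⟨rfl, rfl⟩, hik⟩
  have hdold : 2 ≤ G.dist i k := by
    have h0 : 0 < G.dist i k := hG.pos_dist_of_ne hik
    have h1' : G.dist i k ≠ 1 := fun h => hadj (dist_eq_one_iff_adj.mp h)
    omega
  -- I-sum
  have hI : (∑ j ∈ I.toFinset, ((addE G i k).dist i j : ℝ)) + 1
      ≤ ∑ j ∈ I.toFinset, (G.dist i j : ℝ) := by
    rw [← Finset.add_sum_erase _ (fun j => ((addE G i k).dist i j : ℝ)) hkI,
        ← Finset.add_sum_erase _ (fun j => ((G.dist i j : ℕ) : ℝ)) hkI]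
    have hk1 : (((addE G i k).dist i k : ℕ) : ℝ) = 1 := by exact_mod_cast hdnew
    have hrest : ∑ j ∈ I.toFinset.erase k, (((addE G i k).dist i j : ℕ) : ℝ)
        ≤ ∑ j ∈ I.toFinset.erase k, ((G.dist i j : ℕ) : ℝ) := by
      apply Finset.sum_le_sum
      intro j _
      exact_mod_cast dist_anti' G hG i k i j
    have hk2 : (2 : ℝ) ≤ ((G.dist i k : ℕ) : ℝ) := by exact_mod_cast hdold
    linarith
  -- S-sum
  have hS : ∑ j ∈ Iᶜ.toFinset, ((addE G i k).dist i j : ℝ)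
      ≤ ∑ j ∈ Iᶜ.toFinset, (G.dist i j : ℝ) := by
    apply Finset.sum_le_sum
    intro j _
    exact_mod_cast dist_anti' G hG i k i j
  have hB := bridging_addE_le G hG hV hik hadj
  unfold cost
  rw [hE]
  have hΓ0 : 0 < Γ := lt_of_lt_of_le one_pos hΓ
  nlinarith [mul_le_mul_of_nonneg_left hI (le_of_lt hΓ0)]

theorem stmt0 {V : Type*} [Fintype V] (G : SimpleGraph V) (hG : G.Connected)
    (hV : 1 < Fintype.card V) (I : Set V) (L : V → V → ℝ) (Γ : ℝ) (hΓ : 1 ≤ Γ)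
    (i k : V) (hi : i ∈ I) (hk : k ∈ I) (hik : i ≠ k) (hadj : ¬ G.Adj i k)
    (h1 : L i k < Γ - 1) (h2 : L k i < Γ - 1) :
    cost (addE G i k) I L Γ i < cost G I L Γ i ∧
    cost (addE G i k) I L Γ k < cost G I L Γ k := by
  constructor
  · exact cost_addE_lt G hG hV I L Γ hΓ i k hk hik hadj h1
  · rw [addE_comm]
    exact cost_addE_lt G hG hV I L Γ hΓ k i hi hik.symm (fun h => hadj h.symm) h2
end

section
/- Let G be a connected simple graph on a finite vertex type V with at least two vertices, let I ⊆ V be the set of IC nodes, L : V → V → ℝ a link-cost function and Γ ≥ 1 a real weight. Let i, k ∈ I be distinct vertices that are adjacent in G, and suppose the graph G−ik obtained by deleting the edge {i,k} is still connected. If L(i,k) < Γ − 1 and L(k,i) < Γ − 1, then severing the edge strictly increases the cost of both endpoints: C(i, G−ik) > C(i, G) and C(k, G−ik) > C(k, G). -/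
open SimpleGraph
open scoped Classical

namespace SimpleGraph

variable {V : Type*} (G : SimpleGraph V) (i k : V)

lemma delE_comm : delE G i k = delE G k i := by
  rw [delE, delE, Sym2.eq_swap]

lemma delE_adj {a b : V} : (delE G i k).Adj a b ↔ G.Adj a b ∧ s(a, b) ≠ s(i, k) := by
  simp [delE]

lemma delE_le : delE G i k ≤ G :=
  deleteEdges_le _

lemma not_delE_adj : ¬ (delE G i k).Adj i k := by
  simp [delE_adj]

variable {G i k} in
lemma two_le_dist_delE (hadj : G.Adj i k) (hreach : (delE G i k).Reachable i k) :
    2 ≤ (delE G i k).dist i k := by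
  have hpos : 0 < (delE G i k).dist i k := hreach.pos_dist_of_ne hadj.ne
  have hne : (delE G i k).dist i k ≠ 1 := fun h => not_delE_adj G i k (dist_eq_one_iff_adj.1 h)
  omega

variable [Fintype V]

lemma neighborFinset_delE_self : (delE G i k).neighborFinset i = (G.neighborFinset i).erase k := by
  ext z
  simp only [mem_neighborFinset, delE_adj, Finset.mem_erase, ne_eq, Sym2.eq_iff]
  constructor
  · rintro ⟨h, hne⟩
    exact ⟨fun hzk => hne (Or.inl ⟨trivial, hzk⟩), h⟩
  · rintro ⟨hzk, h⟩
    refine ⟨h, ?_⟩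
    rintro (⟨-, rfl⟩ | ⟨rfl, rfl⟩)
    · exact hzk rfl
    · exact G.loopless.irrefl _ h

lemma degree_delE_of_ne {v : V} (hvi : v ≠ i) (hvk : v ≠ k) :
    (delE G i k).degree v = G.degree v := by
  rw [← card_neighborFinset_eq_degree, ← card_neighborFinset_eq_degree]
  congr 1
  ext z
  simp only [mem_neighborFinset, delE_adj, ne_eq, Sym2.eq_iff]
  refine ⟨And.left, fun h => ⟨h, ?_⟩⟩
  rintro (⟨rfl, rfl⟩ | ⟨rfl, rfl⟩)
  · exact hvi rfl
  · exact hvk rfl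

variable {G i k}

lemma degree_delE_add_one (hadj : G.Adj i k) : (delE G i k).degree i + 1 = G.degree i := by
  rw [← card_neighborFinset_eq_degree, ← card_neighborFinset_eq_degree,
    neighborFinset_delE_self, Finset.card_erase_add_one ((mem_neighborFinset G i k).2 hadj)]

lemma degree_delE_pos (hadj : G.Adj i k) (hreach : (delE G i k).Reachable i k) :
    0 < (delE G i k).degree i := by
  obtain ⟨p⟩ := hreach
  cases p with
  | nil => exact absurd rfl hadj.ne
  | cons h _ => exact (degree_pos_iff_exists_adj _ _).2 ⟨_, h⟩

/-- The numerator `(deg i)⁻¹` grows and the denominator loses the term of `k`, because the other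
neighbours of `i` keep their degrees. -/
lemma bridging_le_bridging_delE (hadj : G.Adj i k) (hpos : 0 < (delE G i k).degree i) :
    bridging G i ≤ bridging (delE G i k) i := by
  set H := delE G i k
  have hdeg_nbr : ∀ j ∈ H.neighborFinset i, H.degree j = G.degree j := by
    intro j hj
    rw [neighborFinset_delE_self, Finset.mem_erase, mem_neighborFinset] at hj
    exact degree_delE_of_ne G i k hj.2.ne' hj.1
  have hsum_pos : 0 < ∑ j ∈ H.neighborFinset i, (G.degree j : ℝ)⁻¹ := by
    have hne : (H.neighborFinset i).Nonempty :=
      Finset.card_pos.1 ((card_neighborFinset_eq_degree H i).symm ▸ hpos)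
    refine Finset.sum_pos (fun j hj => ?_) hne
    have hj : G.Adj i j := delE_le G i k ((mem_neighborFinset H i j).1 hj)
    have : 0 < G.degree j := (degree_pos_iff_exists_adj G j).2 ⟨i, hj.symm⟩
    positivity
  have hsum_le : ∑ j ∈ H.neighborFinset i, (G.degree j : ℝ)⁻¹
      ≤ ∑ j ∈ G.neighborFinset i, (G.degree j : ℝ)⁻¹ := by
    rw [neighborFinset_delE_self]
    exact Finset.sum_le_sum_of_subset_of_nonneg (Finset.erase_subset _ _)
      (fun j _ _ => by positivity)
  have hinv_le : (G.degree i : ℝ)⁻¹ ≤ (H.degree i : ℝ)⁻¹ := by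
    have hdeg : H.degree i + 1 = G.degree i := degree_delE_add_one hadj
    have hle : H.degree i ≤ G.degree i := by omega
    exact inv_anti₀ (by exact_mod_cast hpos) (by exact_mod_cast hle)
  have hsum_eq : ∑ j ∈ H.neighborFinset i, (H.degree j : ℝ)⁻¹
      = ∑ j ∈ H.neighborFinset i, (G.degree j : ℝ)⁻¹ :=
    Finset.sum_congr rfl fun j hj => by rw [hdeg_nbr j hj]
  rw [bridging, bridging, hsum_eq]
  exact div_le_div₀ (by positivity) hinv_le hsum_pos hsum_le

end SimpleGraph

open SimpleGraph

/-- Dropping `ik` saves `L i k` in links but costs at least `Γ` in hop distance to `k ∈ I`;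
no other term of the cost decreases. -/
lemma cost_lt_cost_delE {V : Type*} [Fintype V] {G : SimpleGraph V} {I : Set V}
    {L : V → V → ℝ} {Γ : ℝ} (hΓ : 0 ≤ Γ) {i k : V} (hk : k ∈ I) (hadj : G.Adj i k)
    (hcon : (delE G i k).Connected) (hL : L i k < Γ) :
    cost G I L Γ i < cost (delE G i k) I L Γ i := by
  set H := delE G i k
  have hdist : ∀ j, (G.dist i j : ℝ) ≤ H.dist i j := fun j => by
    exact_mod_cast (hcon.preconnected i j).dist_anti (delE_le G i k)
  have hlinks :
      ∑ z ∈ H.neighborFinset i, L i z = (∑ z ∈ G.neighborFinset i, L i z) - L i k := by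
    rw [neighborFinset_delE_self, eq_sub_iff_add_eq,
      Finset.sum_erase_add _ _ ((mem_neighborFinset G i k).2 hadj)]
  have hkI : k ∈ I.toFinset := Set.mem_toFinset.2 hk
  have hsumI :
      (∑ j ∈ I.toFinset, (G.dist i j : ℝ)) + 1 ≤ ∑ j ∈ I.toFinset, (H.dist i j : ℝ) := by
    rw [← Finset.sum_erase_add _ _ hkI, ← Finset.sum_erase_add _ _ hkI,
      dist_eq_one_iff_adj.2 hadj]
    have hk2 : (2 : ℝ) ≤ H.dist i k := by
      exact_mod_cast two_le_dist_delE hadj (hcon.preconnected i k)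
    have hrest := Finset.sum_le_sum fun j (_ : j ∈ I.toFinset.erase k) => hdist j
    push_cast
    linarith
  have hsumS :
      ∑ j ∈ Iᶜ.toFinset, (G.dist i j : ℝ) ≤ ∑ j ∈ Iᶜ.toFinset, (H.dist i j : ℝ) :=
    Finset.sum_le_sum fun j _ => hdist j
  have hbr : bridging G i ≤ bridging H i :=
    bridging_le_bridging_delE hadj (degree_delE_pos hadj (hcon.preconnected i k))
  have hsumI_Γ : Γ * (∑ j ∈ I.toFinset, (G.dist i j : ℝ)) + Γ
      ≤ Γ * ∑ j ∈ I.toFinset, (H.dist i j : ℝ) := by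
    linarith [mul_le_mul_of_nonneg_left hsumI hΓ]
  rw [cost, cost, hlinks]
  linarith

theorem stmt1_general {V : Type*} [Fintype V] (G : SimpleGraph V)
    (I : Set V) (L : V → V → ℝ) (Γ : ℝ) (hΓ : 1 ≤ Γ)
    (i k : V) (hi : i ∈ I) (hk : k ∈ I) (hadj : G.Adj i k)
    (hcon : (delE G i k).Connected)
    (h1 : L i k < Γ - 1) (h2 : L k i < Γ - 1) :
    cost (delE G i k) I L Γ i > cost G I L Γ i ∧
    cost (delE G i k) I L Γ k > cost G I L Γ k := by
  refine ⟨cost_lt_cost_delE (by linarith) hk hadj hcon (by linarith), ?_⟩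
  rw [delE_comm] at hcon ⊢
  exact cost_lt_cost_delE (by linarith) hi hadj.symm hcon (by linarith)

theorem stmt1 {V : Type*} [Fintype V] (G : SimpleGraph V) (hG : G.Connected)
    (hV : 1 < Fintype.card V) (I : Set V) (L : V → V → ℝ) (Γ : ℝ) (hΓ : 1 ≤ Γ)
    (i k : V) (hi : i ∈ I) (hk : k ∈ I) (hik : i ≠ k) (hadj : G.Adj i k)
    (hcon : (delE G i k).Connected)
    (h1 : L i k < Γ - 1) (h2 : L k i < Γ - 1) :
    cost (delE G i k) I L Γ i > cost G I L Γ i ∧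
    cost (delE G i k) I L Γ k > cost G I L Γ k :=
  stmt1_general G I L Γ hΓ i k hi hk hadj hcon h1 h2
end

section
/- Bound on the change of the bridging coefficient under link establishment (the bound 'ΔB_i < 1' used in the proof of Theorem 1, in the stronger true form): let G be a finite simple graph and let i ≠ k be non-adjacent vertices with deg_G(i) ≥ 1. Then B_{G+ik}(i) < B_G(i); in particular the change B_{G+ik}(i) − B_G(i) is less than 1. -/
open SimpleGraph
open scoped Classical

/-! Adding the edge `ik` raises `deg i` by one and contributes the new term `1 / (deg k + 1)` to
the sum in the denominator of `B(i)`, while the degrees of the old neighbours of `i` (which are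
neither `i` nor `k`) do not change. So the numerator of `B(i)` strictly decreases and its
denominator strictly increases. -/

namespace SimpleGraph

variable {V : Type*} (G : SimpleGraph V)

lemma addE_comm (i k : V) : addE G i k = addE G k i := by
  rw [addE, addE, Sym2.eq_swap]

lemma addE_adj {i k a b : V} :
    (addE G i k).Adj a b ↔ G.Adj a b ∨ (a = i ∧ b = k ∨ a = k ∧ b = i) ∧ a ≠ b :=
  (sup_adj ..).trans (or_congr_right (edge_adj i k a b))

variable [Fintype V] {i k : V}

lemma neighborFinset_addE_left (hik : i ≠ k) :
    (addE G i k).neighborFinset i = insert k (G.neighborFinset i) := by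
  ext a
  simp only [mem_neighborFinset, addE_adj, Finset.mem_insert]
  grind

lemma neighborFinset_addE_of_ne {j : V} (hji : j ≠ i) (hjk : j ≠ k) :
    (addE G i k).neighborFinset j = G.neighborFinset j := by
  ext a
  simp only [mem_neighborFinset, addE_adj]
  grind

lemma degree_addE_left (hik : i ≠ k) (hadj : ¬ G.Adj i k) :
    (addE G i k).degree i = G.degree i + 1 := by
  rw [← card_neighborFinset_eq_degree, neighborFinset_addE_left G hik,
    Finset.card_insert_of_notMem (by simpa using hadj), card_neighborFinset_eq_degree]

lemma degree_addE_right (hik : i ≠ k) (hadj : ¬ G.Adj i k) :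
    (addE G i k).degree k = G.degree k + 1 := by
  rw [addE_comm, degree_addE_left G hik.symm fun h => hadj h.symm]

lemma degree_addE_of_ne {j : V} (hji : j ≠ i) (hjk : j ≠ k) :
    (addE G i k).degree j = G.degree j := by
  rw [← card_neighborFinset_eq_degree, neighborFinset_addE_of_ne G hji hjk,
    card_neighborFinset_eq_degree]

lemma bridging_addE_left (hik : i ≠ k) (hadj : ¬ G.Adj i k) :
    bridging (addE G i k) i = ((G.degree i : ℝ) + 1)⁻¹ /
      (((G.degree k : ℝ) + 1)⁻¹ + ∑ j ∈ G.neighborFinset i, (G.degree j : ℝ)⁻¹) := by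
  have hk : k ∉ G.neighborFinset i := by simpa using hadj
  rw [bridging, neighborFinset_addE_left G hik, Finset.sum_insert hk,
    degree_addE_left G hik hadj, degree_addE_right G hik hadj]
  push_cast
  congr 2
  refine Finset.sum_congr rfl fun j hj => ?_
  have hji : j ≠ i := (G.ne_of_adj ((mem_neighborFinset ..).1 hj)).symm
  rw [degree_addE_of_ne G hji (ne_of_mem_of_not_mem hj hk)]

lemma sum_inv_degree_neighborFinset_pos (hi : 0 < G.degree i) :
    0 < ∑ j ∈ G.neighborFinset i, (G.degree j : ℝ)⁻¹ := by
  refine Finset.sum_pos (fun j hj => ?_) ?_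
  · have : 0 < G.degree j :=
      (G.degree_pos_iff_exists_adj j).2 ⟨i, ((mem_neighborFinset ..).1 hj).symm⟩
    positivity
  · rwa [← Finset.card_pos, card_neighborFinset_eq_degree]

end SimpleGraph

lemma inv_add_one_div_add_lt_inv_div {d c S : ℝ} (hd : 0 < d) (hc : 0 < c) (hS : 0 < S) :
    (d + 1)⁻¹ / (c + S) < d⁻¹ / S :=
  calc (d + 1)⁻¹ / (c + S) < d⁻¹ / (c + S) :=
        div_lt_div_of_pos_right (inv_strictAnti₀ hd (by linarith)) (by linarith)
    _ < d⁻¹ / S := div_lt_div_of_pos_left (by positivity) hS (by linarith)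

theorem stmt3 {V : Type*} [Fintype V] (G : SimpleGraph V) (i k : V)
    (hik : i ≠ k) (hadj : ¬ G.Adj i k) (hdeg : 1 ≤ G.degree i) :
    bridging (addE G i k) i < bridging G i ∧
    bridging (addE G i k) i - bridging G i < 1 := by
  have hlt : bridging (addE G i k) i < bridging G i := by
    rw [G.bridging_addE_left hik hadj, bridging]
    exact inv_add_one_div_add_lt_inv_div (by exact_mod_cast hdeg) (by positivity)
      (G.sum_inv_degree_neighborFinset_pos hdeg)
  exact ⟨hlt, by linarith⟩
end

section
/- Change of the bridging coefficient under link severance (used in the severance part of Theorem 1): let G be a finite simple graph and let i, k be adjacent vertices with deg_G(i) ≥ 2. Then B_{G−ik}(i) > B_G(i); in particular the change B_{G−ik}(i) − B_G(i) is greater than −1. -/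
open SimpleGraph
open scoped Classical

theorem stmt4 {V : Type*} [Fintype V] (G : SimpleGraph V) (i k : V)
    (hadj : G.Adj i k) (hdeg : 2 ≤ G.degree i) :
    bridging (delE G i k) i > bridging G i ∧
    bridging (delE G i k) i - bridging G i > -1 := by
  have hik : i ≠ k := hadj.ne
  have hkN : k ∈ G.neighborFinset i := by simpa using hadj
  have hN : (delE G i k).neighborFinset i = G.neighborFinset i \ {k} := by
    ext j
    rw [mem_neighborFinset]
    simp only [mem_neighborFinset, Finset.mem_sdiff, Finset.mem_singleton, delE,
      deleteEdges_adj, Set.mem_singleton_iff, Sym2.eq_iff]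
    tauto
  have hdi : (delE G i k).degree i = G.degree i - 1 := by
    rw [← card_neighborFinset_eq_degree, ← card_neighborFinset_eq_degree, hN,
      Finset.card_sdiff_of_subset (by simpa using hkN)]
    simp
  have hdj : ∀ j ∈ G.neighborFinset i \ {k}, (delE G i k).degree j = G.degree j := by
    intro j hj
    rw [Finset.mem_sdiff, Finset.mem_singleton] at hj
    have hji : j ≠ i := (G.ne_of_adj ((mem_neighborFinset _ _ _).mp hj.1)).symm
    have hjk : j ≠ k := hj.2
    rw [← card_neighborFinset_eq_degree, ← card_neighborFinset_eq_degree]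
    congr 1
    ext w
    rw [mem_neighborFinset]
    simp only [mem_neighborFinset, delE, deleteEdges_adj, Set.mem_singleton_iff, Sym2.eq_iff]
    tauto
  have hpos : ∀ j ∈ G.neighborFinset i, (0 : ℝ) < ((G.degree j : ℝ))⁻¹ := by
    intro j hj
    rw [mem_neighborFinset] at hj
    have : 0 < G.degree j := G.degree_pos_iff_exists_adj j |>.mpr ⟨i, hj.symm⟩
    positivity
  set den' : ℝ := ∑ j ∈ G.neighborFinset i \ {k}, ((G.degree j : ℝ))⁻¹ with hden'
  set den : ℝ := ∑ j ∈ G.neighborFinset i, ((G.degree j : ℝ))⁻¹ with hden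
  have hsub : den' + ((G.degree k : ℝ))⁻¹ = den := by
    rw [hden', hden]
    have := Finset.sum_sdiff (f := fun j => ((G.degree j : ℝ))⁻¹)
      (Finset.singleton_subset_iff.mpr hkN)
    simpa using this
  have hkpos : (0 : ℝ) < ((G.degree k : ℝ))⁻¹ := hpos k hkN
  have hne : (G.neighborFinset i \ {k}).Nonempty := by
    rw [← Finset.card_pos, Finset.card_sdiff_of_subset (Finset.singleton_subset_iff.mpr hkN)]
    have : 2 ≤ (G.neighborFinset i).card := by rwa [card_neighborFinset_eq_degree]
    simp only [Finset.card_singleton]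
    omega
  have hden'pos : 0 < den' :=
    Finset.sum_pos (fun j hj => hpos j (Finset.mem_sdiff.mp hj).1) hne
  have hdenpos : 0 < den := by linarith
  have hlt : den' < den := by linarith
  have hB' : bridging (delE G i k) i = ((G.degree i - 1 : ℕ) : ℝ)⁻¹ / den' := by
    rw [bridging, hdi, hN]
    congr 1
    exact Finset.sum_congr rfl fun j hj => by rw [hdj j hj]
  have hnum : ((G.degree i : ℝ))⁻¹ < ((G.degree i - 1 : ℕ) : ℝ)⁻¹ := by
    apply inv_strictAnti₀
    · have : 1 ≤ G.degree i - 1 := by omega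
      exact_mod_cast Nat.lt_of_lt_of_le Nat.zero_lt_one (by exact_mod_cast this)
    · exact_mod_cast Nat.sub_lt (by omega) (by omega)
  have hnum0 : (0 : ℝ) ≤ ((G.degree i : ℝ))⁻¹ := by positivity
  have hmain : bridging G i < bridging (delE G i k) i := by
    rw [hB', bridging]
    exact div_lt_div₀ hnum (le_of_lt hlt) (by positivity) hden'pos
  constructor
  · exact hmain
  · linarith
end

section
/- Leaf-bypass lemma (the fact that attaching a new link to a degree-one node leaves all other hop distances from the new neighbor unchanged, used in the proofs of Theorems 2 and 3): let G be a connected simple graph on a finite vertex type, let j be a vertex with deg_G(j) = 1 and unique neighbor i, and let u be a vertex with u ≠ j, u not adjacent to j in G, and dist_G(u, i) ≤ 2. Then dist_{G+uj}(u, j) = 1, and for every vertex k ≠ j one has dist_{G+uj}(u, k) = dist_G(u, k). -/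
open SimpleGraph
open scoped Classical

theorem stmt6 {V : Type*} [Fintype V] (G : SimpleGraph V) (hG : G.Connected)
    (j i u : V) (hdeg : G.degree j = 1) (hnbr : G.neighborSet j = {i})
    (huj : u ≠ j) (hadj : ¬ G.Adj u j) (hdist : G.dist u i ≤ 2) :
    (addE G u j).dist u j = 1 ∧
    ∀ k : V, k ≠ j → (addE G u j).dist u k = G.dist u k := by
  classical
  set G' := addE G u j with hG'
  have hle : G ≤ G' := le_sup_left
  have hG'conn : G'.Connected := hG.mono hle
  have hadjuj : G'.Adj u j := by
    refine Or.inr ?_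
    simp [fromEdgeSet_adj, huj]
  have hGj : ∀ x, G.Adj x j → x = i := by
    intro x hx
    have : x ∈ G.neighborSet j := hx.symm
    rw [hnbr] at this
    exact this
  have hG'j : ∀ x, G'.Adj x j → x = u ∨ x = i := by
    intro x hx
    rcases hx with hx | hx
    · exact Or.inr (hGj x hx)
    · simp only [fromEdgeSet_adj, Set.mem_singleton_iff, Sym2.eq, Sym2.rel_iff',
        Prod.mk.injEq, Prod.swap_prod_mk] at hx
      rcases hx.1 with ⟨h1, h2⟩ | ⟨h1, h2⟩
      · exact Or.inl h1
      · exact absurd h2.symm huj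
  have hG'adj : ∀ a c : V, a ≠ j → c ≠ j → G'.Adj a c → G.Adj a c := by
    intro a c ha hc hac
    rcases hac with h | h
    · exact h
    · exfalso
      simp only [fromEdgeSet_adj, Set.mem_singleton_iff, Sym2.eq, Sym2.rel_iff',
        Prod.mk.injEq, Prod.swap_prod_mk] at h
      rcases h.1 with ⟨h1, h2⟩ | ⟨h1, h2⟩
      · exact hc h2
      · exact ha h1
  have hdist2 : ∀ a d : V, (a = u ∨ a = i) → (d = u ∨ d = i) → G.dist a d ≤ 2 := by
    intro a d ha hd
    rcases ha with rfl | rfl <;> rcases hd with rfl | rfl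
    · simp [SimpleGraph.dist_self]
    · exact hdist
    · rw [SimpleGraph.dist_comm]; exact hdist
    · simp [SimpleGraph.dist_self]
  have key : ∀ n : ℕ, ∀ a b : V, a ≠ j → b ≠ j → ∀ w : G'.Walk a b, w.length = n →
      G.dist a b ≤ n := by
    intro n
    induction n using Nat.strong_induction_on with
    | _ n IH =>
      intro a b ha hb w hw
      cases w with
      | nil => simp [SimpleGraph.dist_self]
      | cons h p =>
        rename_i c
        by_cases hc : c = j
        · cases p with
          | nil => exact absurd hc hb
          | cons h' p' =>
            rename_i d
            simp only [Walk.length_cons] at hw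
            have haj : G'.Adj a j := hc ▸ h
            have h'j : G'.Adj d j := hc ▸ h'.symm
            have hd : d ≠ j := fun hdj => G'.irrefl (hdj ▸ h'j)
            have hlen : p'.length < n := by omega
            have h1 : G.dist d b ≤ p'.length := IH p'.length hlen d b hd hb p' rfl
            have h2 : G.dist a d ≤ 2 := hdist2 a d (hG'j a haj) (hG'j d h'j)
            have h3 : G.dist a b ≤ G.dist a d + G.dist d b := hG.dist_triangle
            omega
        · simp only [Walk.length_cons] at hw
          have hac : G.Adj a c := hG'adj a c ha hc h
          have hlen : p.length < n := by omega
          have h1 : G.dist c b ≤ p.length := IH p.length hlen c b hc hb p rfl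
          have h2 : G.dist a c ≤ 1 := le_of_eq (dist_eq_one_iff_adj.2 hac)
          have h3 : G.dist a b ≤ G.dist a c + G.dist c b := hG.dist_triangle
          omega
  refine ⟨dist_eq_one_iff_adj.2 hadjuj, ?_⟩
  intro k hk
  apply le_antisymm
  · exact (hG u k).dist_anti hle
  · obtain ⟨w, hwl⟩ := hG'conn.exists_walk_length_eq_dist u k
    have := key w.length u k huj hk w rfl
    omega
end

section
/- Theorem 3 (link-cost threshold for keeping non-IC nodes at degree one): let G be a connected simple graph on a finite vertex type, I ⊆ V the set of IC nodes forming a clique in G, L : V → V → ℝ a link-cost function and Γ ≥ 1 a real weight. Let j and j' be distinct non-IC nodes (j, j' ∉ I), each of degree 1 in G, whose unique neighbors are the same IC node i ∈ I. Then establishing the link {j,j'} strictly increases the cost of j if and only if the link cost exceeds the threshold determined by the bridging-coefficient change: C(j, G+jj') > C(j, G) ⟺ L(j, j') > 1 − (B_{G+jj'}(j) − B_G(j)). -/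
open SimpleGraph
open scoped Classical

private lemma walk_shrink {V : Type*} {G G' : SimpleGraph V} (f : V → V)
    (hf : ∀ a b, G'.Adj a b → G.Adj (f a) (f b) ∨ f a = f b) :
    ∀ {a c : V} (p : G'.Walk a c), ∃ q : G.Walk (f a) (f c), q.length ≤ p.length := by
  intro a c p
  induction p with
  | nil => exact ⟨SimpleGraph.Walk.nil, le_refl _⟩
  | cons h p ih =>
    obtain ⟨q, hq⟩ := ih
    rcases hf _ _ h with hadj | heq
    · exact ⟨SimpleGraph.Walk.cons hadj q, by simpa using Nat.succ_le_succ hq⟩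
    · exact ⟨q.copy heq.symm rfl, by rw [SimpleGraph.Walk.length_copy]; simp; omega⟩

theorem stmt10 {V : Type*} [Fintype V] (G : SimpleGraph V) (hG : G.Connected)
    (I : Set V) (hclique : ∀ a ∈ I, ∀ b ∈ I, a ≠ b → G.Adj a b)
    (L : V → V → ℝ) (Γ : ℝ) (hΓ : 1 ≤ Γ)
    (j j' i : V) (hjj' : j ≠ j') (hj : j ∉ I) (hj' : j' ∉ I) (hi : i ∈ I)
    (hdegj : G.degree j = 1) (hnbrj : G.neighborSet j = {i})
    (hdegj' : G.degree j' = 1) (hnbrj' : G.neighborSet j' = {i}) :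
    cost (addE G j j') I L Γ j > cost G I L Γ j ↔
      L j j' > 1 - (bridging (addE G j j') j - bridging G j) := by
  classical
  set G' := addE G j j' with hG'def
  have hij : i ≠ j := fun h => hj (h ▸ hi)
  have hij' : i ≠ j' := fun h => hj' (h ▸ hi)
  have hadjji : G.Adj j i := by
    have : i ∈ G.neighborSet j := by rw [hnbrj]; rfl
    exact this
  have hadjj'i : G.Adj j' i := by
    have : i ∈ G.neighborSet j' := by rw [hnbrj']; rfl
    exact this
  have hnadj : ¬ G.Adj j j' := by
    intro h
    have : j' ∈ G.neighborSet j := h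
    rw [hnbrj] at this
    exact hij' this.symm
  have haddadj : ∀ x y, G'.Adj x y ↔ G.Adj x y ∨ (s(x, y) = s(j, j') ∧ x ≠ y) := by
    intro x y
    simp [hG'def, addE, SimpleGraph.fromEdgeSet_adj]
  have hadjG' : G'.Adj j j' := (haddadj j j').mpr (Or.inr ⟨rfl, hjj'⟩)
  have hle : G ≤ G' := le_sup_left
  have hG'conn : G'.Connected := hG.mono hle
  -- the collapsing map
  set f : V → V := fun x => if x = j' then i else x with hfdef
  have hfj : f j = j := if_neg hjj'
  have hf : ∀ a b, G'.Adj a b → G.Adj (f a) (f b) ∨ f a = f b := by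
    intro a b hab
    rw [haddadj] at hab
    rcases hab with hab | ⟨hs, hne⟩
    · by_cases ha : a = j'
      · subst ha
        have : b ∈ G.neighborSet a := hab
        rw [hnbrj'] at this
        have hb : b = i := this
        right
        simp [hfdef, hb, Ne.symm hij']
      · by_cases hb : b = j'
        · subst hb
          have h2 : a ∈ G.neighborSet b := hab.symm
          rw [hnbrj'] at h2
          have ha2 : a = i := h2
          right
          simp [hfdef, ha2, ha, Ne.symm hij']
        · left; simpa [hfdef, ha, hb] using hab
    · rcases Sym2.eq_iff.mp hs with ⟨rfl, rfl⟩ | ⟨rfl, rfl⟩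
      · left; simpa [hfdef, hjj', hij'.symm] using hadjji
      · left; simpa [hfdef, hjj', hij'.symm] using hadjji.symm
  have hdist_le : ∀ u v : V, G'.dist u v ≤ G.dist u v := by
    intro u v
    obtain ⟨p, hp⟩ := hG.exists_walk_length_eq_dist u v
    calc G'.dist u v ≤ (p.mapLe hle).length := SimpleGraph.dist_le _
      _ = p.length := by simp [SimpleGraph.Walk.mapLe]
      _ = G.dist u v := hp
  have hdist_eq : ∀ k : V, k ≠ j' → G'.dist j k = G.dist j k := by
    intro k hk
    refine le_antisymm (hdist_le j k) ?_
    obtain ⟨p, hp⟩ := hG'conn.exists_walk_length_eq_dist j k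
    obtain ⟨q, hq⟩ := walk_shrink f hf p
    have hfk : f k = k := if_neg hk
    calc G.dist j k ≤ (q.copy (by rw [hfj]) (by rw [hfk])).length := SimpleGraph.dist_le _
      _ = q.length := SimpleGraph.Walk.length_copy _ _ _
      _ ≤ p.length := hq
      _ = G'.dist j k := hp
  have hdjj'2 : G.dist j j' = 2 := by
    have h1 : 0 < G.dist j j' := hG.pos_dist_of_ne hjj'
    have h2 : G.dist j j' ≠ 1 := fun h => hnadj (SimpleGraph.dist_eq_one_iff_adj.mp h)
    have h3 : G.dist j j' ≤ 2 :=
      SimpleGraph.dist_le (SimpleGraph.Walk.cons hadjji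
        (SimpleGraph.Walk.cons hadjj'i.symm SimpleGraph.Walk.nil))
    omega
  have hdjj'1 : G'.dist j j' = 1 := SimpleGraph.dist_eq_one_iff_adj.mpr hadjG'
  -- neighbor finsets
  have hNG : G.neighborFinset j = {i} := by
    ext x
    rw [SimpleGraph.mem_neighborFinset, Finset.mem_singleton]
    constructor
    · intro h
      have : x ∈ G.neighborSet j := h
      rw [hnbrj] at this
      exact this
    · rintro rfl; exact hadjji
  have hNG' : G'.neighborFinset j = {i, j'} := by
    have hset : G'.neighborSet j = {i, j'} := by
      ext x
      rw [SimpleGraph.mem_neighborSet, haddadj]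
      constructor
      · rintro (h | ⟨hs, hne⟩)
        · have : x ∈ G.neighborSet j := h
          rw [hnbrj] at this
          exact Or.inl this
        · rcases Sym2.eq_iff.mp hs with ⟨h1, h2⟩ | ⟨h1, h2⟩
          · exact Or.inr h2
          · exact absurd h2.symm hne
      · rintro (rfl | rfl)
        · exact Or.inl hadjji
        · exact Or.inr ⟨rfl, hjj'⟩
    ext x
    rw [SimpleGraph.mem_neighborFinset, ← SimpleGraph.mem_neighborSet, hset]
    simp
  -- split the non-IC distance sum
  have hj'mem : j' ∈ Iᶜ.toFinset := by simp [hj']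
  have hsum_split : ∀ (H : SimpleGraph V),
      (∑ k ∈ Iᶜ.toFinset, (H.dist j k : ℝ))
        = (∑ k ∈ Iᶜ.toFinset.erase j', (H.dist j k : ℝ)) + (H.dist j j' : ℝ) := by
    intro H
    rw [Finset.sum_erase_add _ _ hj'mem]
  have hI_sum : (∑ k ∈ I.toFinset, (G'.dist j k : ℝ)) = ∑ k ∈ I.toFinset, (G.dist j k : ℝ) := by
    refine Finset.sum_congr rfl fun k hk => ?_
    rw [hdist_eq k (fun h => hj' (h ▸ (Set.mem_toFinset.mp hk)))]
  have hS_sum : (∑ k ∈ Iᶜ.toFinset.erase j', (G'.dist j k : ℝ))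
      = ∑ k ∈ Iᶜ.toFinset.erase j', (G.dist j k : ℝ) := by
    refine Finset.sum_congr rfl fun k hk => ?_
    rw [hdist_eq k (Finset.ne_of_mem_erase hk)]
  have hL' : (∑ z ∈ G'.neighborFinset j, L j z) = L j i + L j j' := by
    rw [hNG', Finset.sum_insert (by simp [hij']), Finset.sum_singleton]
  have hL : (∑ z ∈ G.neighborFinset j, L j z) = L j i := by
    rw [hNG, Finset.sum_singleton]
  have hc' : cost G' I L Γ j = (L j i + L j j') + Γ * (∑ k ∈ I.toFinset, (G.dist j k : ℝ))
      + ((∑ k ∈ Iᶜ.toFinset.erase j', (G.dist j k : ℝ)) + 1) + bridging G' j := by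
    rw [cost, hL', hI_sum, hsum_split G', hS_sum, hdjj'1]
    norm_num
  have hc : cost G I L Γ j = L j i + Γ * (∑ k ∈ I.toFinset, (G.dist j k : ℝ))
      + ((∑ k ∈ Iᶜ.toFinset.erase j', (G.dist j k : ℝ)) + 2) + bridging G j := by
    rw [cost, hL, hsum_split G, hdjj'2]
    norm_num
  rw [hc', hc]
  constructor <;> intro h <;> linarith
end
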